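/- arXiv:1510.01077 — 2 statements merged into one kernel-verified Lean document; each statement's English description precedes it below -/
import Mathlib

section
/- (Ground state of the anisotropic counterexample.) Let 0 < ε < 1/2, let D be the 2×2 real matrix with rows (1, -2ε) and (0, 1/ε), and J : ℝ² → ℝ, J(u) = ‖Du‖₁. Then the set of minimizers of J over the unit circle {u ∈ ℝ² : ‖u‖₂ = 1} is exactly {(1,0), (-1,0)}. -/
/-! On the unit circle `|u¹| + |u²| ≥ (u¹)² + (u²)² = 1`, so the triangle inequality gives
`J(u) ≥ |u¹| - 2ε|u²| + |u²|/ε ≥ 1 + (1/ε - 2ε - 1)|u²|`. The coefficient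
`1/ε - 2ε - 1 = (1 - 2ε)(1 + ε)/ε` is positive for `0 < ε < 1/2`, while `J(±e₁) = 1`;
hence the minimum value is `1`, attained exactly where `u² = 0`. -/

open Matrix

/-- `p` is a subgradient of `J` at `u` in `ℝ²`: `J v ≥ J u + ⟨p, v - u⟩` for all `v`. -/
def IsSubgradientAt (J : (Fin 2 → ℝ) → ℝ) (u p : Fin 2 → ℝ) : Prop :=
  ∀ v : Fin 2 → ℝ, J v ≥ J u + p ⬝ᵥ (v - u)

lemma one_le_abs_add_abs_of_sq_add_sq_eq_one {a b : ℝ} (h : a ^ 2 + b ^ 2 = 1) :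
    1 ≤ |a| + |b| := by
  nlinarith [sq_abs a, sq_abs b, abs_nonneg a, abs_nonneg b]

lemma one_add_mul_abs_le_of_sq_add_sq_eq_one {ε a b : ℝ} (hε0 : 0 < ε)
    (h : a ^ 2 + b ^ 2 = 1) :
    1 + (1 / ε - 2 * ε - 1) * |b| ≤ |a - 2 * ε * b| + |1 / ε * b| := by
  have hsub : |a| - 2 * ε * |b| ≤ |a - 2 * ε * b| := by
    simpa [abs_mul, abs_of_pos hε0] using abs_sub_abs_le_abs_sub a (2 * ε * b)
  have hdiv : |1 / ε * b| = 1 / ε * |b| := by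
    rw [abs_mul, abs_of_pos (one_div_pos.mpr hε0)]
  linarith [one_le_abs_add_abs_of_sq_add_sq_eq_one h]

lemma one_div_sub_two_mul_sub_one_pos {ε : ℝ} (hε0 : 0 < ε) (hε : ε < 1 / 2) :
    0 < 1 / ε - 2 * ε - 1 := by
  have : 2 < 1 / ε := by rw [lt_div_iff₀ hε0]; linarith
  linarith

lemma sum_abs_mulVec_anisotropic (ε : ℝ) (w : Fin 2 → ℝ) :
    ∑ i, |(!![1, -2 * ε; 0, 1 / ε] *ᵥ w) i| = |w 0 - 2 * ε * w 1| + |1 / ε * w 1| := by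
  simp [Fin.sum_univ_two, mulVec, dotProduct, sub_eq_add_neg]

lemma eq_or_eq_of_sq_add_sq_eq_one_of_eq_zero {u : Fin 2 → ℝ}
    (h : u 0 ^ 2 + u 1 ^ 2 = 1) (h1 : u 1 = 0) : u = ![1, 0] ∨ u = ![-1, 0] := by
  have h0 : u 0 = 1 ∨ u 0 = -1 := sq_eq_one_iff.mp (by simpa [h1] using h)
  rcases h0 with h0 | h0
  · exact .inl (by ext i; fin_cases i <;> simp [h0, h1])
  · exact .inr (by ext i; fin_cases i <;> simp [h0, h1])

/-- Ground state of the anisotropic counterexample: for `0 < ε < 1/2`,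
`D = [[1, -2ε], [0, 1/ε]]` and `J(u) = ‖Du‖₁`, the minimizers of `J` over the unit
circle `{‖u‖₂ = 1}` are exactly `±(1,0)`. -/
theorem anisotropic_ground_state
    (ε : ℝ) (hε0 : 0 < ε) (hε : ε < 1 / 2)
    (D : Matrix (Fin 2) (Fin 2) ℝ) (hD : D = !![1, -2 * ε; 0, 1 / ε])
    (J : (Fin 2 → ℝ) → ℝ) (hJ : ∀ w, J w = ∑ i, |D.mulVec w i|) :
    ∀ u : Fin 2 → ℝ,
      ((u 0) ^ 2 + (u 1) ^ 2 = 1 ∧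
          ∀ w : Fin 2 → ℝ, (w 0) ^ 2 + (w 1) ^ 2 = 1 → J u ≤ J w) ↔
        (u = ![1, 0] ∨ u = ![-1, 0]) := by
  subst hD
  have hJ' : ∀ w, J w = |w 0 - 2 * ε * w 1| + |1 / ε * w 1| := fun w => by
    rw [hJ, sum_abs_mulVec_anisotropic]
  have hcoef := one_div_sub_two_mul_sub_one_pos hε0 hε
  have hlower : ∀ w : Fin 2 → ℝ, w 0 ^ 2 + w 1 ^ 2 = 1 →
      1 + (1 / ε - 2 * ε - 1) * |w 1| ≤ J w :=
    fun w hw => hJ' w ▸ one_add_mul_abs_le_of_sq_add_sq_eq_one hε0 hw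
  have hone : ∀ w : Fin 2 → ℝ, w 0 ^ 2 + w 1 ^ 2 = 1 → 1 ≤ J w := fun w hw =>
    (hlower w hw).trans' (le_add_of_nonneg_right (mul_nonneg hcoef.le (abs_nonneg _)))
  intro u
  constructor
  · rintro ⟨hu, hmin⟩
    have hle : J u ≤ 1 := by simpa [hJ'] using hmin ![1, 0] (by norm_num)
    have hu1 : |u 1| ≤ 0 := nonpos_of_mul_nonpos_right (by linarith [hlower u hu]) hcoef
    exact eq_or_eq_of_sq_add_sq_eq_one_of_eq_zero hu (abs_nonpos_iff.mp hu1)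
  · rintro (rfl | rfl) <;> exact ⟨by norm_num, fun w hw => by simpa [hJ'] using hone w hw⟩
end

section
/- (Failure of the Rayleigh principle for the second eigenvalue.) Let 0 < ε < 1/2, let D be the 2×2 real matrix with rows (1, -2ε) and (0, 1/ε), and J : ℝ² → ℝ, J(u) = ‖Du‖₁. Then for v = (0,1), the unique vector orthogonal to the ground state (1,0) on the unit circle up to sign, there is no λ ∈ ℝ such that λ • v ∈ ∂J(v); indeed ∂J(v) = {(-1, 2ε + 1/ε)}. -/
/-!
Near `v = (0, 1)` both coordinates of `D v` keep their signs `(-1, 1)`, so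
`J w = ⟨(-1, 1), D w⟩` there: `J` is locally the linear function with gradient
`Dᵀ (-1, 1) = (-1, 2ε + 1/ε)`. A subgradient at a point where `J` is locally affine must be the
slope, and conversely `Dᵀ sign(D v)` is always a subgradient of `w ↦ ‖D w‖₁` at `v`, because
`⟨s, x⟩ ≤ ‖x‖₁` for every sign vector `s`, with equality for `s = sign x`. The subgradient has
first coordinate `-1 ≠ 0`, so it is not a multiple of `v`.
-/

open Matrix

open Filter Topology

theorem eq_of_isSubgradientAt_of_eventually_eq_affine {J : (Fin 2 → ℝ) → ℝ} {u p q : Fin 2 → ℝ}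
    (hp : IsSubgradientAt J u p) (hJ : ∀ᶠ v in 𝓝 u, J v = J u + q ⬝ᵥ (v - u)) : p = q := by
  -- test the subgradient inequality at `u + t • (p - q)` for a small `t > 0`
  have hline : Tendsto (fun t : ℝ => u + t • (p - q)) (𝓝[>] 0) (𝓝 u) := by
    have : Continuous (fun t : ℝ => u + t • (p - q)) := by fun_prop
    simpa using (this.tendsto 0).mono_left nhdsWithin_le_nhds
  obtain ⟨t, hJt, ht⟩ := ((hline.eventually hJ).and self_mem_nhdsWithin).exists
  have hle : t * ((p - q) ⬝ᵥ (p - q)) ≤ 0 := by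
    have := hp (u + t • (p - q))
    rw [hJt, add_sub_cancel_left, dotProduct_smul, dotProduct_smul] at this
    rw [sub_dotProduct, mul_sub]
    simpa using this
  have : (p - q) ⬝ᵥ (p - q) = 0 :=
    le_antisymm (nonpos_of_mul_nonpos_right hle ht) (dotProduct_self_star_nonneg _)
  exact sub_eq_zero.1 (dotProduct_self_eq_zero.1 this)

section L1Composite

variable {m : Type*} [Fintype m]

noncomputable def signVec (x : m → ℝ) : m → ℝ := fun i => SignType.sign (x i)

theorem signVec_dotProduct_self (x : m → ℝ) : signVec x ⬝ᵥ x = ∑ i, |x i| :=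
  Finset.sum_congr rfl fun i _ => sign_mul_self (x i)

theorem signVec_dotProduct_le (x y : m → ℝ) : signVec y ⬝ᵥ x ≤ ∑ i, |x i| := by
  refine Finset.sum_le_sum fun i _ => ?_
  rcases SignType.trichotomy (SignType.sign (y i)) with h | h | h <;>
    simp only [signVec, h, SignType.coe_neg, SignType.coe_one, SignType.coe_zero] <;>
    linarith [neg_abs_le (x i), le_abs_self (x i), abs_nonneg (x i)]

variable (D : Matrix m (Fin 2) ℝ)

theorem signVec_dotProduct_mulVec (u v : Fin 2 → ℝ) :
    signVec (D *ᵥ u) ⬝ᵥ D *ᵥ v = ∑ i, |(D *ᵥ u) i| + (signVec (D *ᵥ u) ᵥ* D) ⬝ᵥ (v - u) := by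
  rw [← signVec_dotProduct_self, ← dotProduct_mulVec, ← dotProduct_add, ← mulVec_add,
    add_sub_cancel]

theorem isSubgradientAt_l1_comp (u : Fin 2 → ℝ) :
    IsSubgradientAt (fun w => ∑ i, |(D *ᵥ w) i|) u (signVec (D *ᵥ u) ᵥ* D) := fun v => by
  rw [← signVec_dotProduct_mulVec]
  exact signVec_dotProduct_le _ _

theorem eventually_signVec_mulVec_eq {u : Fin 2 → ℝ} (hu : ∀ i, (D *ᵥ u) i ≠ 0) :
    ∀ᶠ v in 𝓝 u, signVec (D *ᵥ v) = signVec (D *ᵥ u) := by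
  have hsign : ∀ i, ∀ᶠ v in 𝓝 u, SignType.sign ((D *ᵥ v) i) = SignType.sign ((D *ᵥ u) i) := by
    intro i
    have hDi : Tendsto (fun v => (D *ᵥ v) i) (𝓝 u) (𝓝 ((D *ᵥ u) i)) :=
      (show Continuous fun v : Fin 2 → ℝ => (D *ᵥ v) i by fun_prop).tendsto u
    exact ((continuousAt_sign_of_ne_zero (hu i)).tendsto.comp hDi).eventually_mem
      ((isOpen_discrete _).mem_nhds (Set.mem_singleton _))
  filter_upwards [eventually_all.2 hsign] with v hv
  exact funext fun i => congrArg _ (hv i)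

theorem isSubgradientAt_l1_comp_iff {u : Fin 2 → ℝ} (hu : ∀ i, (D *ᵥ u) i ≠ 0)
    (p : Fin 2 → ℝ) :
    IsSubgradientAt (fun w => ∑ i, |(D *ᵥ w) i|) u p ↔ p = signVec (D *ᵥ u) ᵥ* D := by
  refine ⟨fun hp => eq_of_isSubgradientAt_of_eventually_eq_affine hp ?_,
    fun h => h ▸ isSubgradientAt_l1_comp D u⟩
  filter_upwards [eventually_signVec_mulVec_eq D hu] with v hv
  rw [← signVec_dotProduct_self, hv, signVec_dotProduct_mulVec]

end L1Composite

theorem rayleigh_principle_fails_second_eigenvalue_general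
    (ε : ℝ) (hε0 : 0 < ε)
    (D : Matrix (Fin 2) (Fin 2) ℝ) (hD : D = !![1, -2 * ε; 0, 1 / ε])
    (J : (Fin 2 → ℝ) → ℝ) (hJ : ∀ w, J w = ∑ i, |D.mulVec w i|) :
    (∀ p : Fin 2 → ℝ,
        IsSubgradientAt J ![0, 1] p ↔ p = ![-1, 2 * ε + 1 / ε]) ∧
      ¬∃ lam : ℝ, IsSubgradientAt J ![0, 1] (lam • ![0, 1]) := by
  have hDu : D *ᵥ ![0, 1] = ![-(2 * ε), 1 / ε] := by
    subst hD; ext i; fin_cases i <;> simp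
  have hDu_ne : ∀ i, (D *ᵥ ![0, 1]) i ≠ 0 := by
    rw [hDu]; intro i; fin_cases i <;> simp [hε0.ne']
  have hsign : signVec ![-(2 * ε), 1 / ε] = ![-1, 1] := by
    ext i; fin_cases i <;> simp [signVec, sign_neg, sign_pos, hε0]
  have hgrad : ![-1, 1] ᵥ* D = ![-1, 2 * ε + 1 / ε] := by
    subst hD; ext i; fin_cases i <;> simp [vecMul, dotProduct, Fin.sum_univ_two]
  have hsub : ∀ p, IsSubgradientAt J ![0, 1] p ↔ p = ![-1, 2 * ε + 1 / ε] := fun p => by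
    rw [show J = _ from funext hJ, isSubgradientAt_l1_comp_iff D hDu_ne, hDu, hsign, hgrad]
  refine ⟨hsub, fun ⟨lam, h⟩ => ?_⟩
  simpa using congrFun ((hsub _).1 h) 0

/-- Failure of the Rayleigh principle for the second eigenvalue: for `0 < ε < 1/2`,
`D = [[1, -2ε], [0, 1/ε]]` and `J(u) = ‖Du‖₁`, the vector `v = (0,1)` (the unique
unit vector orthogonal to the ground state `(1,0)` up to sign) has subdifferential
`∂J(v) = {(-1, 2ε + 1/ε)}`, and there is no `λ ∈ ℝ` with `λ • v ∈ ∂J(v)`. -/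
theorem rayleigh_principle_fails_second_eigenvalue
    (ε : ℝ) (hε0 : 0 < ε) (hε : ε < 1 / 2)
    (D : Matrix (Fin 2) (Fin 2) ℝ) (hD : D = !![1, -2 * ε; 0, 1 / ε])
    (J : (Fin 2 → ℝ) → ℝ) (hJ : ∀ w, J w = ∑ i, |D.mulVec w i|) :
    (∀ p : Fin 2 → ℝ,
        IsSubgradientAt J ![0, 1] p ↔ p = ![-1, 2 * ε + 1 / ε]) ∧
      ¬∃ lam : ℝ, IsSubgradientAt J ![0, 1] (lam • ![0, 1]) :=
  rayleigh_principle_fails_second_eigenvalue_general ε hε0 D hD J hJ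
end
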